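/- Every bivariate s-Fibopolynomial is a polynomial: for all s ≥ 1, n ≥ 0 and 0 ≤ k ≤ n, the rational function C(n,k)_{F_s(x,y)} = ∏_{i=0}^{k−1} F_{s(n−i)}(x,y) / ∏_{i=1}^{k} F_{si}(x,y) is a polynomial in x and y (i.e., the denominator divides the numerator in the polynomial ring). -/

import Mathlib

/-!
The addition formula `F (a + b + 1) = F (a + 1) F (b + 1) + y F a F b` puts `F (a + b)`, and hence
`G (m + n)` for `G m = F (s m)`, in the ideal generated by `G m` and `G n`. Writing
`G (n + 1) = a G (n - k) + b G (k + 1)` then splits `G (n + 1) G n ⋯ G (n - k + 1)` into multiples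
of `G n ⋯ G (n - k)` and of `G (k + 1) G n ⋯ G (n - k + 1)`, both divisible by `G 1 ⋯ G (k + 1)`
by induction on `n`. For `k > n` the numerator contains the factor `G 0 = 0`.
-/

/-- Bivariate Fibonacci polynomials. -/
def bF {R : Type*} [CommRing R] (x y : R) : ℕ → R
  | 0 => 0
  | 1 => 1
  | n + 2 => x * bF x y (n + 1) + y * bF x y n

open Finset

section Fibonacci

variable {R : Type*} [CommRing R] (x y : R)

@[simp] lemma bF_zero : bF x y 0 = 0 := rfl

@[simp] lemma bF_one : bF x y 1 = 1 := rfl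

lemma bF_add_two (n : ℕ) : bF x y (n + 2) = x * bF x y (n + 1) + y * bF x y n := rfl

lemma bF_add_add_one (m n : ℕ) :
    bF x y (m + n + 1) = bF x y (m + 1) * bF x y (n + 1) + y * bF x y m * bF x y n := by
  induction n using Nat.twoStepInduction generalizing m with
  | zero => simp
  | one => simp [bF_add_two, mul_comm]
  | more n ih₁ ih₂ =>
    rw [show m + (n + 2) + 1 = m + n + 1 + 2 by omega, bF_add_two,
      show m + n + 1 + 1 = m + (n + 1) + 1 by omega, ih₂, ih₁, bF_add_two x y (n + 1),
      bF_add_two x y n]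
    ring

lemma bF_add_mem_span_pair (a b : ℕ) : bF x y (a + b) ∈ Ideal.span {bF x y a, bF x y b} := by
  cases b with
  | zero => exact Ideal.subset_span (by simp)
  | succ b =>
    rw [Ideal.mem_span_pair, ← add_assoc, bF_add_add_one]
    exact ⟨y * bF x y b, bF x y (a + 1), by ring⟩

end Fibonacci

section DivisibilitySequence

variable {R : Type*} [CommRing R] {G : ℕ → R}

lemma prod_range_tsub_eq_zero (hG₀ : G 0 = 0) {n k : ℕ} (hnk : n < k) :
    ∏ i ∈ range k, G (n - i) = 0 :=
  prod_eq_zero (mem_range.2 hnk) (by simpa using hG₀)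

theorem prod_range_succ_dvd_prod_range_tsub (hG₀ : G 0 = 0)
    (hG : ∀ a b, G (a + b) ∈ Ideal.span {G a, G b}) (n k : ℕ) :
    ∏ i ∈ range k, G (i + 1) ∣ ∏ i ∈ range k, G (n - i) := by
  induction n generalizing k with
  | zero =>
    cases k with
    | zero => simp
    | succ k => rw [prod_range_tsub_eq_zero hG₀ k.succ_pos]; exact dvd_zero _
  | succ n ih =>
    cases k with
    | zero => simp
    | succ k =>
      rcases lt_or_ge n k with hnk | hkn
      · rw [prod_range_tsub_eq_zero hG₀ (Nat.succ_lt_succ hnk)]; exact dvd_zero _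
      obtain ⟨a, b, hab⟩ : ∃ a b, a * G (n - k) + b * G (k + 1) = G (n + 1) := by
        rw [← Ideal.mem_span_pair, show n + 1 = n - k + (k + 1) by omega]
        exact hG _ _
      have hstep : ∏ i ∈ range (k + 1), G (n + 1 - i) =
          a * ∏ i ∈ range (k + 1), G (n - i) + b * ((∏ i ∈ range k, G (n - i)) * G (k + 1)) := by
        rw [prod_range_succ', prod_range_succ, Nat.sub_zero, ← hab]
        simp only [Nat.add_sub_add_right]
        ring
      rw [hstep]
      refine dvd_add (dvd_mul_of_dvd_right (ih (k + 1)) _) (dvd_mul_of_dvd_right ?_ _)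
      rw [prod_range_succ]
      exact mul_dvd_mul_right (ih k) _

end DivisibilitySequence

theorem fibo_is_polynomial_general (s n k : ℕ) :
    (∏ i ∈ Finset.range k,
        bF (MvPolynomial.X 0 : MvPolynomial (Fin 2) ℤ) (MvPolynomial.X 1) (s * (i + 1))) ∣
      ∏ i ∈ Finset.range k,
        bF (MvPolynomial.X 0 : MvPolynomial (Fin 2) ℤ) (MvPolynomial.X 1) (s * (n - i)) := by
  refine prod_range_succ_dvd_prod_range_tsub (G := fun m => bF _ _ (s * m)) (by simp)
    (fun a b => ?_) n k
  simpa only [mul_add] using bF_add_mem_span_pair _ _ (s * a) (s * b)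

/-- Every bivariate s-Fibopolynomial is a polynomial: the denominator
F_s F_{2s} ⋯ F_{ks} divides the numerator F_{sn} F_{s(n-1)} ⋯ F_{s(n-k+1)}
in the polynomial ring ℤ[x,y]. -/
theorem fibo_is_polynomial (s n k : ℕ) (hs : 1 ≤ s) (hk : k ≤ n) :
    (∏ i ∈ Finset.range k,
        bF (MvPolynomial.X 0 : MvPolynomial (Fin 2) ℤ) (MvPolynomial.X 1) (s * (i + 1))) ∣
      ∏ i ∈ Finset.range k,
        bF (MvPolynomial.X 0 : MvPolynomial (Fin 2) ℤ) (MvPolynomial.X 1) (s * (n - i)) :=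
  fibo_is_polynomial_general s n k
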